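/- The tensors Π, Φ, Ψ satisfy the relation Ψ.Π + Π.Ψ = 2(Φ.Ψ + Ψ.Φ). -/

import Mathlib

/-! `Ψ(U,V) = -ω(U,V) Jπ` is skew-adjoint and commutes with `J` and `π`, so it annihilates every
form built from `⟪·,·⟫`, `⟪J·,·⟫`, `h` and `ω`; in particular `Ψ(U,V).Π₀ = Ψ(U,V).Φ₀ = 0`.
What remains is `Π(U,V).Ψ₀ = 2 Φ(U,V).Ψ₀`, and as `Ψ₀ = -ω ⊗ ω`, by the Leibniz rule it suffices
that `Π(U,V).ω = 2 Φ(U,V).ω`. Since `ω` only sees `D`-components, this follows from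
`2 π(Φ(U,V)W) = π(Π(U,V)W) + Π(πU,πV)(πW)`, because `Π(πU,πV)`, being skew-adjoint and
`J`-linear, preserves `⟪J·,·⟫`. -/

open scoped RealInnerProductSpace

noncomputable section

variable {V : Type*} [NormedAddCommGroup V] [InnerProductSpace ℝ V] [FiniteDimensional ℝ V]

/-- The orthogonal projection onto `D`, as a map `V → V`. -/
def projD (D : Submodule ℝ V) (X : V) : V := (Submodule.orthogonalProjectionOnto D X : V)

/-- The bilinear form `h(X,Y) = ⟪πX, πY⟫`. -/
def hForm (D : Submodule ℝ V) (X Y : V) : ℝ := ⟪projD D X, projD D Y⟫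

/-- The 2-form `ω(X,Y) = h(JX, Y)`. -/
def omForm (J : V →ₗ[ℝ] V) (D : Submodule ℝ V) (X Y : V) : ℝ := hForm D (J X) Y

/-- The standard Kähler curvature-type tensor `Π` of constant holomorphic sectional curvature. -/
def PiT (J : V →ₗ[ℝ] V) (U Vv W : V) : V :=
  (1/4 : ℝ) • (⟪Vv, W⟫ • U - ⟪U, W⟫ • Vv + ⟪J Vv, W⟫ • J U - ⟪J U, W⟫ • J Vv
    - (2 * ⟪J U, Vv⟫) • J W)

/-- The curvature-type tensor `Φ`. -/
def PhiT (J : V →ₗ[ℝ] V) (D : Submodule ℝ V) (U Vv W : V) : V :=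
  (1/8 : ℝ) • (⟪Vv, W⟫ • projD D U - ⟪U, W⟫ • projD D Vv
    + hForm D Vv W • U - hForm D U W • Vv
    + ⟪J Vv, W⟫ • projD D (J U) - ⟪J U, W⟫ • projD D (J Vv)
    + omForm J D Vv W • J U - omForm J D U W • J Vv
    - (2 * ⟪J U, Vv⟫) • projD D (J W) - (2 * omForm J D U Vv) • J W)

/-- The curvature-type tensor `Ψ(U,V)W = −ω(U,V)·J(πW)`. -/
def PsiT (J : V →ₗ[ℝ] V) (D : Submodule ℝ V) (U Vv W : V) : V :=
  -(omForm J D U Vv) • J (projD D W)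

/-- The derivation action of an endomorphism `A` on a bilinear form `T`. -/
def der2 (A : V → V) (T : V → V → ℝ) (X Y : V) : ℝ := -T (A X) Y - T X (A Y)

/-- The derivation action of an endomorphism `A` on a 4-multilinear form `T`. -/
def der4 (A : V → V) (T : V → V → V → V → ℝ) (X Y Z W : V) : ℝ :=
  -T (A X) Y Z W - T X (A Y) Z W - T X Y (A Z) W - T X Y Z (A W)

/-- The 4-form `S₀(X,Y,Z,W) = ⟪S(X,Y)Z, W⟫` associated with an endomorphism-valued 2-form. -/
def form4 (S : V → V → V → V) (X Y Z W : V) : ℝ := ⟪S X Y Z, W⟫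

/-- The 6-multilinear form `(R.S)(U,V,X,Y,Z,W) = (R(U,V).S₀)(X,Y,Z,W)`. -/
def dotRS (R S : V → V → V → V) (U Vv X Y Z W : V) : ℝ :=
  der4 (R U Vv) (form4 S) X Y Z W

section Derivation

variable {E : Type*}

def curvForm (b c d e : E → E → ℝ) (X Y Z W : E) : ℝ :=
  b Y Z * c X W - b X Z * c Y W + d Y Z * e X W - d X Z * e Y W - 2 * d X Y * e Z W

variable (A : E → E)

theorem der4_add (S T : E → E → E → E → ℝ) : der4 A (S + T) = der4 A S + der4 A T := by
  funext X Y Z W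
  simp only [der4, Pi.add_apply]
  ring

theorem der4_smul (r : ℝ) (T : E → E → E → E → ℝ) : der4 A (r • T) = r • der4 A T := by
  funext X Y Z W
  simp only [der4, Pi.smul_apply, smul_eq_mul]
  ring

theorem der4_curvForm_eq_zero {b c d e : E → E → ℝ} (hb : der2 A b = 0) (hc : der2 A c = 0)
    (hd : der2 A d = 0) (he : der2 A e = 0) : der4 A (curvForm b c d e) = 0 := by
  funext X Y Z W
  have leibniz : der4 A (curvForm b c d e) X Y Z W =
      curvForm (der2 A b) c (der2 A d) e X Y Z W + curvForm b (der2 A c) d (der2 A e) X Y Z W := by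
    simp only [der4, der2, curvForm]
    ring
  rw [leibniz, hb, hc, hd, he]
  simp [curvForm]

end Derivation

section InnerProductSpace

variable {E : Type*} [NormedAddCommGroup E] [InnerProductSpace ℝ E] {A : E → E}

theorem der2_inner_eq_zero (hA : ∀ X Y, ⟪A X, Y⟫ = -⟪X, A Y⟫) :
    der2 A (fun X Y => ⟪X, Y⟫) = 0 := by
  funext X Y
  simp [der2, hA]

variable (J : E →ₗ[ℝ] E)

theorem der2_inner_J_eq_zero (hA : ∀ X Y, ⟪A X, Y⟫ = -⟪X, A Y⟫)
    (hAJ : ∀ X, A (J X) = J (A X)) : der2 A (fun X Y => ⟪J X, Y⟫) = 0 := by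
  funext X Y
  simp [der2, ← hAJ, hA]

theorem inner_J_right (hJ2 : ∀ X : E, J (J X) = -X) (hJg : ∀ X Y : E, ⟪J X, J Y⟫ = ⟪X, Y⟫)
    (X Y : E) : ⟪X, J Y⟫ = -⟪J X, Y⟫ := by
  rw [← hJg, hJ2, inner_neg_right]

theorem form4_PiT :
    form4 (PiT J) = (1 / 4 : ℝ) • curvForm (fun X Y => ⟪X, Y⟫) (fun X Y => ⟪X, Y⟫)
      (fun X Y => ⟪J X, Y⟫) (fun X Y => ⟪J X, Y⟫) := by
  funext X Y Z W
  simp only [form4, PiT, curvForm, Pi.smul_apply, smul_eq_mul, inner_add_left, inner_sub_left,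
    real_inner_smul_left]

theorem der4_form4_PiT_eq_zero (hA : ∀ X Y, ⟪A X, Y⟫ = -⟪X, A Y⟫)
    (hAJ : ∀ X, A (J X) = J (A X)) : der4 A (form4 (PiT J)) = 0 := by
  have hg := der2_inner_eq_zero hA
  have hj := der2_inner_J_eq_zero J hA hAJ
  rw [form4_PiT, der4_smul, der4_curvForm_eq_zero A hg hg hj hj, smul_zero]

theorem inner_PiT_left (hJ2 : ∀ X : E, J (J X) = -X) (hJg : ∀ X Y : E, ⟪J X, J Y⟫ = ⟪X, Y⟫)
    (U Vv X Y : E) : ⟪PiT J U Vv X, Y⟫ = -⟪X, PiT J U Vv Y⟫ := by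
  simp only [PiT, inner_add_left, inner_sub_left, inner_add_right, inner_sub_right,
    real_inner_smul_left, real_inner_smul_right, inner_J_right J hJ2 hJg X, real_inner_comm X]
  ring

theorem PiT_J (hJ2 : ∀ X : E, J (J X) = -X) (hJg : ∀ X Y : E, ⟪J X, J Y⟫ = ⟪X, Y⟫)
    (U Vv X : E) : PiT J U Vv (J X) = J (PiT J U Vv X) := by
  simp only [PiT, map_add, map_sub, map_smul, hJ2, hJg, inner_J_right J hJ2 hJg _ X]
  module

end InnerProductSpace

section Projection

variable (D : Submodule ℝ V)

theorem projD_apply (X : V) : projD D X = D.starProjection X := rfl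

theorem projD_projD (X : V) : projD D (projD D X) = projD D X :=
  Submodule.starProjection_eq_self_iff.mpr (D.starProjection_apply_mem X)

theorem inner_projD_left (X Y : V) : ⟪projD D X, Y⟫ = hForm D X Y :=
  calc ⟪projD D X, Y⟫ = ⟪X, projD D Y⟫ := D.inner_starProjection_left_eq_right X Y
    _ = ⟪X, projD D (projD D Y)⟫ := by rw [projD_projD]
    _ = hForm D X Y := (D.inner_starProjection_left_eq_right X _).symm

theorem inner_projD_right (X Y : V) : ⟪X, projD D Y⟫ = hForm D X Y := by
  rw [← inner_projD_left, projD_apply, projD_apply, D.inner_starProjection_left_eq_right]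

theorem der2_hForm_eq_zero {A : V → V} (hA : ∀ X Y, ⟪A X, Y⟫ = -⟪X, A Y⟫)
    (hAD : ∀ X, A (projD D X) = projD D (A X)) : der2 A (hForm D) = 0 := by
  funext X Y
  simp [der2, hForm, ← hAD, hA]

variable (J : V →ₗ[ℝ] V)

theorem der2_omForm_eq_zero {A : V → V} (hA : ∀ X Y, ⟪A X, Y⟫ = -⟪X, A Y⟫)
    (hAJ : ∀ X, A (J X) = J (A X)) (hAD : ∀ X, A (projD D X) = projD D (A X)) :
    der2 A (omForm J D) = 0 := by
  funext X Y
  have hh := congrFun (congrFun (der2_hForm_eq_zero D hA hAD) (J X)) Y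
  simpa [der2, omForm, hAJ] using hh

theorem form4_PhiT :
    form4 (PhiT J D) = (1 / 8 : ℝ) •
      (curvForm (fun X Y => ⟪X, Y⟫) (hForm D) (fun X Y => ⟪J X, Y⟫) (omForm J D) +
        curvForm (hForm D) (fun X Y => ⟪X, Y⟫) (omForm J D) (fun X Y => ⟪J X, Y⟫)) := by
  funext X Y Z W
  simp only [form4, PhiT, curvForm, omForm, Pi.smul_apply, Pi.add_apply, smul_eq_mul,
    inner_add_left, inner_sub_left, real_inner_smul_left, inner_projD_left]
  ring

theorem der4_form4_PhiT_eq_zero {A : V → V} (hA : ∀ X Y, ⟪A X, Y⟫ = -⟪X, A Y⟫)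
    (hAJ : ∀ X, A (J X) = J (A X)) (hAD : ∀ X, A (projD D X) = projD D (A X)) :
    der4 A (form4 (PhiT J D)) = 0 := by
  have hg := der2_inner_eq_zero hA
  have hj := der2_inner_J_eq_zero J hA hAJ
  have hh := der2_hForm_eq_zero D hA hAD
  have hω := der2_omForm_eq_zero D J hA hAJ hAD
  rw [form4_PhiT, der4_smul, der4_add, der4_curvForm_eq_zero A hg hh hj hω,
    der4_curvForm_eq_zero A hh hg hω hj, add_zero, smul_zero]

theorem projD_J (hJ2 : ∀ X : V, J (J X) = -X) (hJg : ∀ X Y : V, ⟪J X, J Y⟫ = ⟪X, Y⟫)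
    (hJD : ∀ X ∈ D, J X ∈ D) (X : V) :
    projD D (J X) = J (projD D X) := by
  refine Submodule.eq_starProjection_of_mem_of_inner_eq_zero
    (hJD _ (D.starProjection_apply_mem X)) fun w hw => ?_
  rw [projD_apply, ← map_sub, ← neg_eq_zero, ← inner_J_right J hJ2 hJg]
  exact D.starProjection_inner_eq_zero X (J w) (hJD w hw)

theorem omForm_eq (hJ2 : ∀ X : V, J (J X) = -X) (hJg : ∀ X Y : V, ⟪J X, J Y⟫ = ⟪X, Y⟫)
    (hJD : ∀ X ∈ D, J X ∈ D) (X Y : V) :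
    omForm J D X Y = ⟪J (projD D X), projD D Y⟫ := by
  rw [omForm, hForm, projD_J D J hJ2 hJg hJD]

theorem inner_J_projD_left (hJ2 : ∀ X : V, J (J X) = -X) (hJg : ∀ X Y : V, ⟪J X, J Y⟫ = ⟪X, Y⟫)
    (hJD : ∀ X ∈ D, J X ∈ D) (X Y : V) :
    ⟪J (projD D X), Y⟫ = -⟪X, J (projD D Y)⟫ := by
  rw [inner_J_right J hJ2 hJg X, neg_neg, ← projD_J D J hJ2 hJg hJD, inner_projD_left,
    inner_projD_right]

theorem projD_PhiT (hJ2 : ∀ X : V, J (J X) = -X) (hJg : ∀ X Y : V, ⟪J X, J Y⟫ = ⟪X, Y⟫)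
    (hJD : ∀ X ∈ D, J X ∈ D) (U Vv W : V) :
    projD D (PhiT J D U Vv W) =
      (1 / 2 : ℝ) • (projD D (PiT J U Vv W) + PiT J (projD D U) (projD D Vv) (projD D W)) := by
  simp only [PhiT, PiT, hForm, omForm, projD_apply, map_add, map_sub, map_smul]
  simp only [← projD_apply, projD_J D J hJ2 hJg hJD, projD_projD]
  module

theorem der2_PhiT_omForm (hJ2 : ∀ X : V, J (J X) = -X) (hJg : ∀ X Y : V, ⟪J X, J Y⟫ = ⟪X, Y⟫)
    (hJD : ∀ X ∈ D, J X ∈ D) (U Vv X Y : V) :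
    2 * der2 (PhiT J D U Vv) (omForm J D) X Y = der2 (PiT J U Vv) (omForm J D) X Y := by
  have hR := der2_inner_J_eq_zero J (inner_PiT_left J hJ2 hJg (projD D U) (projD D Vv))
    (PiT_J J hJ2 hJg (projD D U) (projD D Vv))
  have hRπ := congrFun (congrFun hR (projD D X)) (projD D Y)
  simp only [der2, omForm_eq D J hJ2 hJg hJD, projD_PhiT D J hJ2 hJg hJD, map_add, map_smul,
    inner_add_left, inner_add_right, real_inner_smul_left, real_inner_smul_right,
    Pi.zero_apply] at hRπ ⊢
  linarith

theorem inner_PsiT_left (hJ2 : ∀ X : V, J (J X) = -X) (hJg : ∀ X Y : V, ⟪J X, J Y⟫ = ⟪X, Y⟫)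
    (hJD : ∀ X ∈ D, J X ∈ D) (U Vv X Y : V) :
    ⟪PsiT J D U Vv X, Y⟫ = -⟪X, PsiT J D U Vv Y⟫ := by
  simp only [PsiT, real_inner_smul_left, real_inner_smul_right,
    inner_J_projD_left D J hJ2 hJg hJD]
  ring

theorem PsiT_J (hJ2 : ∀ X : V, J (J X) = -X) (hJg : ∀ X Y : V, ⟪J X, J Y⟫ = ⟪X, Y⟫)
    (hJD : ∀ X ∈ D, J X ∈ D) (U Vv X : V) :
    PsiT J D U Vv (J X) = J (PsiT J D U Vv X) := by
  simp only [PsiT, map_smul, projD_J D J hJ2 hJg hJD]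

theorem PsiT_projD (hJ2 : ∀ X : V, J (J X) = -X) (hJg : ∀ X Y : V, ⟪J X, J Y⟫ = ⟪X, Y⟫)
    (hJD : ∀ X ∈ D, J X ∈ D) (U Vv X : V) :
    PsiT J D U Vv (projD D X) = projD D (PsiT J D U Vv X) := by
  simp only [PsiT, projD_apply, map_smul]
  simp only [← projD_apply, projD_J D J hJ2 hJg hJD, projD_projD]

theorem form4_PsiT_apply (hJ2 : ∀ X : V, J (J X) = -X) (hJg : ∀ X Y : V, ⟪J X, J Y⟫ = ⟪X, Y⟫)
    (hJD : ∀ X ∈ D, J X ∈ D) (X Y Z W : V) :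
    form4 (PsiT J D) X Y Z W = -(omForm J D X Y * omForm J D Z W) := by
  rw [form4, PsiT, real_inner_smul_left, ← projD_J D J hJ2 hJg hJD, inner_projD_left, ← omForm]
  ring

theorem der4_form4_PsiT (hJ2 : ∀ X : V, J (J X) = -X) (hJg : ∀ X Y : V, ⟪J X, J Y⟫ = ⟪X, Y⟫)
    (hJD : ∀ X ∈ D, J X ∈ D) (A : V → V) (X Y Z W : V) :
    der4 A (form4 (PsiT J D)) X Y Z W =
      -(der2 A (omForm J D) X Y * omForm J D Z W + omForm J D X Y * der2 A (omForm J D) Z W) := by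
  simp only [der4, der2, form4_PsiT_apply D J hJ2 hJg hJD]
  ring

end Projection

theorem stmt_12_general {V : Type*} [NormedAddCommGroup V] [InnerProductSpace ℝ V]
    [FiniteDimensional ℝ V]
    (J : V →ₗ[ℝ] V) (hJ2 : ∀ X : V, J (J X) = -X)
    (hJg : ∀ X Y : V, ⟪J X, J Y⟫ = ⟪X, Y⟫)
    (D : Submodule ℝ V)
    (hJD : ∀ X ∈ D, J X ∈ D) :
    ∀ U Vv X Y Z W : V,
      dotRS (PsiT J D) (PiT J) U Vv X Y Z W
        + dotRS (PiT J) (PsiT J D) U Vv X Y Z W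
      = 2 * (dotRS (PhiT J D) (PsiT J D) U Vv X Y Z W
          + dotRS (PsiT J D) (PhiT J D) U Vv X Y Z W) := by
  intro U Vv X Y Z W
  have hskew := inner_PsiT_left D J hJ2 hJg hJD U Vv
  have hJ := PsiT_J D J hJ2 hJg hJD U Vv
  have hPi := der4_form4_PiT_eq_zero J hskew hJ
  have hPhi := der4_form4_PhiT_eq_zero D J hskew hJ (PsiT_projD D J hJ2 hJg hJD U Vv)
  simp only [dotRS, hPi, hPhi, Pi.zero_apply, der4_form4_PsiT D J hJ2 hJg hJD]
  linear_combination omForm J D Z W * der2_PhiT_omForm D J hJ2 hJg hJD U Vv X Y +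
    omForm J D X Y * der2_PhiT_omForm D J hJ2 hJg hJD U Vv Z W

theorem stmt_12 {V : Type*} [NormedAddCommGroup V] [InnerProductSpace ℝ V]
    [FiniteDimensional ℝ V]
    (J : V →ₗ[ℝ] V) (hJ2 : ∀ X : V, J (J X) = -X)
    (hJg : ∀ X Y : V, ⟪J X, J Y⟫ = ⟪X, Y⟫)
    (D : Submodule ℝ V) (hD2 : Module.finrank ℝ ↥D = 2)
    (hJD : ∀ X ∈ D, J X ∈ D) :
    ∀ U Vv X Y Z W : V,
      dotRS (PsiT J D) (PiT J) U Vv X Y Z W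
        + dotRS (PiT J) (PsiT J D) U Vv X Y Z W
      = 2 * (dotRS (PhiT J D) (PsiT J D) U Vv X Y Z W
          + dotRS (PsiT J D) (PhiT J D) U Vv X Y Z W) :=
  stmt_12_general J hJ2 hJg D hJD
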